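/- For every t with 0 ≤ t < 1/6, the derivative of d satisfies d′(t) = −(20·d(t)²)/(6·q(t)·c(t)) − (9·a(t)·z₂(t)·d(t))/(q(t)·c(t)) − (3·y(t)·d(t))/q(t). -/

import Mathlib

noncomputable def pFun (t : ℝ) : ℝ := 1 - 6 * t

noncomputable def rFun (s t : ℝ) : ℝ := Real.exp (-(7776 / 25) * (1 - s) ^ 2 * t ^ 3)

noncomputable def qFun (t : ℝ) : ℝ := pFun t ^ 3 / 6

noncomputable def yFun (t : ℝ) : ℝ := pFun t ^ 2

noncomputable def aFun (s t : ℝ) : ℝ := (5 / 6) * s * (1 - s) ^ 2 * pFun t ^ 5 * rFun s t ^ 2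

noncomputable def c1Fun (s t : ℝ) : ℝ := (5 / 6) * s * (1 - s) * pFun t ^ 2 * rFun s t

noncomputable def c2Fun (s t : ℝ) : ℝ := (5 / 6) * (1 - s) ^ 2 * pFun t ^ 3 * rFun s t ^ 2

noncomputable def cFun (s t : ℝ) : ℝ := c1Fun s t * c2Fun s t

noncomputable def dFun (s t : ℝ) : ℝ := (5 / 6) * s * (1 - s) ^ 3 * pFun t ^ 7 * rFun s t ^ 3

noncomputable def z0Fun (s t : ℝ) : ℝ := (5 / 6) * (1 - s) ^ 5 * pFun t ^ 9 * rFun s t ^ 3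

noncomputable def z1Fun (s t : ℝ) : ℝ := (1 - s) ^ 4 * (1 - pFun t) * pFun t ^ 6 * rFun s t ^ 2

noncomputable def z2Fun (s t : ℝ) : ℝ :=
  (6 / 5) * (1 - s) ^ 3 * (1 - pFun t) ^ 2 * pFun t ^ 3 * rFun s t


/-! Since `d = K p⁷ r³`, its logarithmic derivative is
`7 p'/p + 3 r'/r = -42/p - 9 (7776/25) (1-s)² t²`. On the right-hand side of the claim each term
is `d` times a ratio of the trajectory functions that collapses, the powers of `s`, `1 - s`, `p`
and `r` cancelling and `1 - p = 6t`, to `(36/5)/p`, `(7776/25)(1-s)² t²` and `6/p` respectively;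
the coefficients then add up, `-(10/3)(36/5) - 3·6 = -42`. -/

theorem hasDerivAt_pFun (t : ℝ) : HasDerivAt pFun (-6) t := by
  show HasDerivAt (fun x : ℝ => 1 - 6 * x) (-6) t
  simpa using ((hasDerivAt_id t).const_mul (6 : ℝ)).const_sub 1

theorem hasDerivAt_rFun (s t : ℝ) :
    HasDerivAt (rFun s) (-(3 * (7776 / 25) * (1 - s) ^ 2 * t ^ 2) * rFun s t) t := by
  have hexponent := (hasDerivAt_pow 3 t).const_mul (-(7776 / 25) * (1 - s) ^ 2)
  exact hexponent.exp.congr_deriv (by simp only [rFun]; norm_num; ring)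

theorem hasDerivAt_dFun {s t : ℝ} (hp : pFun t ≠ 0) :
    HasDerivAt (dFun s)
      ((-42 / pFun t - 9 * (7776 / 25) * (1 - s) ^ 2 * t ^ 2) * dFun s t) t := by
  have hprod := (((hasDerivAt_pFun t).pow 7).const_mul (5 / 6 * s * (1 - s) ^ 3)).mul
    ((hasDerivAt_rFun s t).pow 3)
  refine hprod.congr_deriv ?_
  simp only [dFun, Pi.pow_apply]
  field_simp
  ring

theorem yFun_div_qFun {t : ℝ} (hp : pFun t ≠ 0) : yFun t / qFun t = 6 / pFun t := by
  simp only [yFun, qFun]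
  field_simp

theorem dFun_div_qFun_mul_cFun {s t : ℝ} (hs : s ≠ 0) (hs' : s ≠ 1) (hp : pFun t ≠ 0) :
    dFun s t / (qFun t * cFun s t) = 36 / 5 / pFun t := by
  have hs'' : 1 - s ≠ 0 := sub_ne_zero.mpr hs'.symm
  have hr : rFun s t ≠ 0 := Real.exp_ne_zero _
  simp only [dFun, qFun, cFun, c1Fun, c2Fun]
  field_simp
  ring

theorem aFun_mul_z2Fun_div_qFun_mul_cFun {s t : ℝ} (hs : s ≠ 0) (hs' : s ≠ 1)
    (hp : pFun t ≠ 0) :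
    aFun s t * z2Fun s t / (qFun t * cFun s t) = 7776 / 25 * (1 - s) ^ 2 * t ^ 2 := by
  have hs'' : 1 - s ≠ 0 := sub_ne_zero.mpr hs'.symm
  have hr : rFun s t ≠ 0 := Real.exp_ne_zero _
  have hp' : 1 - pFun t = 6 * t := by simp only [pFun]; ring
  simp only [aFun, z2Fun, qFun, cFun, c1Fun, c2Fun, hp']
  field_simp
  ring

theorem d_hasDerivAt_general (s : ℝ) (hs0 : 0 < s) (hs1 : s < 1) (t : ℝ)
    (ht : t < 1 / 6) :
    HasDerivAt (dFun s)
      (-(20 * dFun s t ^ 2) / (6 * qFun t * cFun s t)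
        - (9 * aFun s t * z2Fun s t * dFun s t) / (qFun t * cFun s t)
        - (3 * yFun t * dFun s t) / qFun t) t := by
  have hp : pFun t ≠ 0 := by simp only [pFun]; linarith
  convert hasDerivAt_dFun (s := s) hp using 1
  calc _ = -(10 / 3) * dFun s t * (dFun s t / (qFun t * cFun s t))
        - 9 * dFun s t * (aFun s t * z2Fun s t / (qFun t * cFun s t))
        - 3 * dFun s t * (yFun t / qFun t) := by ring
    _ = _ := by
      rw [dFun_div_qFun_mul_cFun hs0.ne' hs1.ne hp,
        aFun_mul_z2Fun_div_qFun_mul_cFun hs0.ne' hs1.ne hp, yFun_div_qFun hp]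
      ring

theorem d_hasDerivAt (s : ℝ) (hs0 : 0 < s) (hs1 : s < 1) (t : ℝ)
    (ht0 : 0 ≤ t) (ht : t < 1 / 6) :
    HasDerivAt (dFun s)
      (-(20 * dFun s t ^ 2) / (6 * qFun t * cFun s t)
        - (9 * aFun s t * z2Fun s t * dFun s t) / (qFun t * cFun s t)
        - (3 * yFun t * dFun s t) / qFun t) t :=
  d_hasDerivAt_general s hs0 hs1 t ht
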